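/- arXiv:1809.10123 — 2 statements merged into one kernel-verified Lean document; each statement's English description precedes it below -/
import Mathlib

section
/- Let f : ℝ → ℝ be continuous and T > 0. Let M be the running maximum of f on [0,T], extended constantly outside [0,T], with Lebesgue–Stieltjes measure μ_M. Then for every t ∈ [0,T]: ∫_{(0,t]} f(s) dμ_M(s) = ( M(t)² − M(0)² ) / 2. -/
/-!
Where `f s < M s`, continuity of `f` forces `M` to be constant near `s`: the maximum over
`[0, s]` is attained at some `v < s`, and `f` stays below `M s` on a neighbourhood of `s` that
avoids `v`. A Lebesgue–Stieltjes measure charges no point at which its distribution function is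
locally constant (such a point lies in a rational interval of zero mass), so `f = M` holds
`μ_M`-almost everywhere on `(0, t]`.

It remains to integrate `M` against `ν = μ_M` restricted to `(0, t]`, for which
`M x - M 0 = ν (-∞, x]`. Since `M` is continuous, `ν` has no atoms, and
`2 ∫ ν (-∞, x] dν(x) = ν(ℝ)²`: under `ν ⊗ ν` the half-planes `{y ≤ x}` and `{x ≤ y}` have equal
mass by symmetry, cover the plane, and meet in the null diagonal.
-/

open MeasureTheory Set Filter Topology

/-- The running maximum of `f` on `[0, T]`, extended constantly outside `[0, T]`. -/
noncomputable def runMax (f : ℝ → ℝ) (T t : ℝ) : ℝ :=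
  sSup (f '' Set.Icc (0:ℝ) (max 0 (min t T)))

theorem two_mul_lintegral_measure_Iic (ν : Measure ℝ) [IsFiniteMeasure ν]
    [NullSingletonClass ν] :
    2 * ∫⁻ x, ν (Iic x) ∂ν = ν univ ^ 2 := by
  set S : Set (ℝ × ℝ) := {p | p.2 ≤ p.1}
  have hS : MeasurableSet S := measurableSet_le measurable_snd measurable_fst
  have hS_swap : MeasurableSet (Prod.swap ⁻¹' S) := measurable_swap hS
  have h_lower : ν.prod ν S = ∫⁻ x, ν (Iic x) ∂ν := Measure.prod_apply hS
  have h_upper : ν.prod ν (Prod.swap ⁻¹' S) = ν.prod ν S := by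
    rw [← Measure.map_apply measurable_swap hS, Measure.prod_swap]
  have h_union : S ∪ Prod.swap ⁻¹' S = univ := by
    ext p
    simp only [S, mem_union, mem_ofPred_eq, mem_preimage, Prod.fst_swap, Prod.snd_swap,
      mem_univ, iff_true]
    exact le_total _ _
  have h_diagonal : ν.prod ν (S ∩ Prod.swap ⁻¹' S) = 0 :=
    (Measure.measure_prod_null (hS.inter hS_swap)).2 <| ae_of_all _ fun x =>
      measure_mono_null (fun y hy => le_antisymm hy.1 hy.2) (measure_singleton x)
  calc 2 * ∫⁻ x, ν (Iic x) ∂ν = ν.prod ν S + ν.prod ν (Prod.swap ⁻¹' S) := by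
        rw [two_mul, h_upper, h_lower]
    _ = ν.prod ν (S ∪ Prod.swap ⁻¹' S) + ν.prod ν (S ∩ Prod.swap ⁻¹' S) :=
        (measure_union_add_inter _ hS_swap).symm
    _ = ν univ ^ 2 := by
        rw [h_union, h_diagonal, add_zero, ← univ_prod_univ, Measure.prod_prod, sq]

theorem integral_measureReal_Iic (ν : Measure ℝ) [IsFiniteMeasure ν] [NullSingletonClass ν] :
    ∫ x, ν.real (Iic x) ∂ν = ν.real univ ^ 2 / 2 := by
  have h := congrArg ENNReal.toReal (two_mul_lintegral_measure_Iic ν)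
  have h_meas : Measurable fun x => ν (Iic x) :=
    Monotone.measurable fun x y hxy => measure_mono (Iic_subset_Iic.2 hxy)
  rw [ENNReal.toReal_mul, ENNReal.toReal_pow,
    ← integral_toReal h_meas.aemeasurable (ae_of_all _ fun x => measure_lt_top ν _)] at h
  simp only [measureReal_def]
  norm_num at h
  linarith

theorem integrable_measureReal_Iic (ν : Measure ℝ) [IsFiniteMeasure ν] :
    Integrable (fun x => ν.real (Iic x)) ν :=
  have h_mono : Monotone fun x => ν.real (Iic x) := fun x y hxy =>
    measureReal_mono (Iic_subset_Iic.2 hxy)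
  Integrable.of_bound h_mono.measurable.aestronglyMeasurable (ν.real univ) <|
    ae_of_all _ fun x => by
      rw [Real.norm_of_nonneg measureReal_nonneg]
      exact measureReal_mono (subset_univ _)

section StieltjesMeasure

variable {μ : Measure ℝ} {g : ℝ → ℝ}

theorem nullSingletonClass_of_measure_Ioc
    (hμ : ∀ a b : ℝ, a ≤ b → μ (Ioc a b) = ENNReal.ofReal (g b - g a)) (hg : Continuous g) :
    NullSingletonClass μ := by
  refine ⟨fun x => le_antisymm ?_ bot_le⟩
  have h_lim : Tendsto (fun y => ENNReal.ofReal (g x - g y)) (𝓝[<] x) (𝓝 0) := by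
    have : Tendsto (fun y => g x - g y) (𝓝[<] x) (𝓝 (g x - g x)) :=
      (tendsto_const_nhds.sub hg.continuousAt.tendsto).mono_left nhdsWithin_le_nhds
    simpa using ENNReal.tendsto_ofReal this
  refine ge_of_tendsto h_lim ?_
  filter_upwards [self_mem_nhdsWithin] with y (hy : y < x)
  rw [← hμ y x hy.le]
  exact measure_mono (singleton_subset_iff.2 ⟨hy, le_rfl⟩)

theorem measure_setOf_eventually_eq_eq_zero
    (hμ : ∀ a b : ℝ, a ≤ b → μ (Ioc a b) = ENNReal.ofReal (g b - g a)) :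
    μ {x | ∀ᶠ y in 𝓝 x, g y = g x} = 0 := by
  set N := ⋃ (p : ℚ) (q : ℚ) (_ : (p : ℝ) ≤ q ∧ g p = g q), Ioc (p : ℝ) q
  have hN : μ N = 0 := measure_iUnion_null fun p => measure_iUnion_null fun q =>
    measure_iUnion_null fun hpq => by rw [hμ _ _ hpq.1, hpq.2, sub_self, ENNReal.ofReal_zero]
  refine measure_mono_null (fun x hx => ?_) hN
  obtain ⟨l, u, hxlu, hlu⟩ := mem_nhds_iff_exists_Ioo_subset.1 hx
  obtain ⟨p, hlp, hpx⟩ := exists_rat_btwn hxlu.1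
  obtain ⟨q, hxq, hqu⟩ := exists_rat_btwn hxlu.2
  have hgp : g p = g x := hlu ⟨hlp, hpx.trans hxlu.2⟩
  have hgq : g q = g x := hlu ⟨hxlu.1.trans hxq, hqu⟩
  simp only [N, mem_iUnion]
  exact ⟨p, q, ⟨(hpx.trans hxq).le, hgp.trans hgq.symm⟩, hpx, hxq.le⟩

theorem setIntegral_Ioc_eq_sq_sub_sq_div_two
    (hμ : ∀ a b : ℝ, a ≤ b → μ (Ioc a b) = ENNReal.ofReal (g b - g a))
    (hg_mono : Monotone g) (hg : Continuous g) {a b : ℝ} (hab : a ≤ b) :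
    ∫ x in Ioc a b, g x ∂μ = (g b ^ 2 - g a ^ 2) / 2 := by
  have := nullSingletonClass_of_measure_Ioc hμ hg
  have : IsFiniteMeasure (μ.restrict (Ioc a b)) :=
    isFiniteMeasure_restrict.2 (by rw [hμ a b hab]; exact ENNReal.ofReal_ne_top)
  set ν := μ.restrict (Ioc a b)
  have hν_Iic : ∀ x ∈ Ioc a b, ν.real (Iic x) = g x - g a := fun x hx => by
    rw [measureReal_def, Measure.restrict_apply measurableSet_Iic, Iic_inter_Ioc_of_le hx.2,
      hμ a x hx.1.le, ENNReal.toReal_ofReal (sub_nonneg.2 (hg_mono hx.1.le))]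
  have hν_univ : ν.real univ = g b - g a := by
    rw [measureReal_def, Measure.restrict_apply_univ, hμ a b hab,
      ENNReal.toReal_ofReal (sub_nonneg.2 (hg_mono hab))]
  have hg_ae : g =ᵐ[ν] fun x => ν.real (Iic x) + g a := by
    filter_upwards [ae_restrict_mem measurableSet_Ioc] with x hx
    rw [hν_Iic x hx, sub_add_cancel]
  rw [integral_congr_ae hg_ae, integral_add (integrable_measureReal_Iic ν) (integrable_const _),
    integral_measureReal_Iic, integral_const, smul_eq_mul, hν_univ]
  ring

end StieltjesMeasure

section RunningMaximum

variable {f : ℝ → ℝ} {T : ℝ}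

theorem continuous_runMax (hf : Continuous f) : Continuous (runMax f T) := by
  -- rescale the moving interval `[0, max 0 (min t T)]` to the fixed compact set `[0, 1]`
  have h_rescale : ∀ t, runMax f T t =
      sSup ((fun u => f (u * max 0 (min t T))) '' Icc 0 1) := fun t => by
    rw [← image_image f (· * max 0 (min t T)), image_mul_right_Icc zero_le_one (le_max_left _ _),
      zero_mul, one_mul, runMax]
  rw [funext h_rescale]
  exact isCompact_Icc.continuous_sSup (by fun_prop)

theorem monotone_runMax (hf : Continuous f) : Monotone (runMax f T) := fun _ _ hst =>
  csSup_le_csSup (isCompact_Icc.image hf).bddAbove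
    ((nonempty_Icc.2 (le_max_left _ _)).image f)
    (image_mono (Icc_subset_Icc le_rfl (max_le_max le_rfl (min_le_min hst le_rfl))))

theorem apply_le_runMax (hf : Continuous f) {v y : ℝ} (hv : v ∈ Icc 0 T) (hvy : v ≤ y) :
    f v ≤ runMax f T y :=
  le_csSup (isCompact_Icc.image hf).bddAbove
    ⟨v, ⟨hv.1, le_max_of_le_right (le_min hvy hv.2)⟩, rfl⟩

theorem exists_apply_eq_runMax (hf : Continuous f) {s : ℝ} (hs : s ∈ Icc 0 T) :
    ∃ v ∈ Icc 0 s, f v = runMax f T s := by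
  rw [runMax, min_eq_left hs.2, max_eq_right hs.1]
  exact (isCompact_Icc.image hf).sSup_mem ((nonempty_Icc.2 hs.1).image f)

theorem runMax_eventually_eq_of_lt (hf : Continuous f) {s : ℝ} (hs : s ∈ Icc 0 T)
    (hlt : f s < runMax f T s) : ∀ᶠ y in 𝓝 s, runMax f T y = runMax f T s := by
  obtain ⟨v, hv, hfv⟩ := exists_apply_eq_runMax hf hs
  obtain ⟨l, u, hslu, hlu⟩ :=
    mem_nhds_iff_exists_Ioo_subset.1 (hf.continuousAt.eventually (gt_mem_nhds hlt))
  have hvl : v ≤ l := by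
    by_contra! hlv
    exact (hlu ⟨hlv, hv.2.trans_lt hslu.2⟩).ne hfv
  filter_upwards [Ioo_mem_nhds hslu.1 hslu.2] with y hy
  refine le_antisymm ?_ (hfv ▸ apply_le_runMax hf ⟨hv.1, hv.2.trans hs.2⟩ (hvl.trans hy.1.le))
  refine csSup_le ((nonempty_Icc.2 (le_max_left _ _)).image f) ?_
  rintro _ ⟨w, hw, rfl⟩
  rcases le_or_gt w s with hws | hsw
  · exact apply_le_runMax hf ⟨hw.1, hws.trans hs.2⟩ hws
  · have hwy : w ≤ y := hw.2.trans (max_le (hv.1.trans (hvl.trans hy.1.le)) (min_le_left _ _))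
    exact (hlu ⟨hslu.1.trans hsw, hwy.trans_lt hy.2⟩).le

theorem ae_restrict_Ioc_eq_runMax (hf : Continuous f) {μ : Measure ℝ}
    (hμ : ∀ a b : ℝ, a ≤ b → μ (Ioc a b) = ENNReal.ofReal (runMax f T b - runMax f T a))
    {t : ℝ} (htT : t ≤ T) :
    f =ᵐ[μ.restrict (Ioc 0 t)] runMax f T := by
  rw [EventuallyEq, ae_restrict_iff' measurableSet_Ioc, ae_iff]
  refine measure_mono_null (fun s hs => ?_) (measure_setOf_eventually_eq_eq_zero hμ)
  obtain ⟨⟨hs0, hst⟩, hs_ne⟩ := Classical.not_imp.1 hs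
  have hsT : s ∈ Icc 0 T := ⟨hs0.le, hst.trans htT⟩
  exact runMax_eventually_eq_of_lt hf hsT (lt_of_le_of_ne (apply_le_runMax hf hsT le_rfl) hs_ne)

end RunningMaximum

theorem integral_self_wrt_runMax_general
    (f : ℝ → ℝ) (hf : Continuous f) (T : ℝ)
    (μM : Measure ℝ)
    (hμM : ∀ a b : ℝ, a ≤ b →
      μM (Set.Ioc a b) = ENNReal.ofReal (runMax f T b - runMax f T a)) :
    ∀ t ∈ Set.Icc (0:ℝ) T,
      ∫ s in Set.Ioc (0:ℝ) t, f s ∂μM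
        = ((runMax f T t) ^ 2 - (runMax f T 0) ^ 2) / 2 := by
  rintro t ⟨ht0, htT⟩
  rw [integral_congr_ae (ae_restrict_Ioc_eq_runMax hf hμM htT)]
  exact setIntegral_Ioc_eq_sq_sub_sq_div_two hμM (monotone_runMax hf) (continuous_runMax hf) ht0

/-- `∫_{(0,t]} f(s) dM(s) = (M(t)² − M(0)²)/2` for the running maximum `M` of a
continuous function `f` (quadratic-functional Example of Section 4). -/
theorem integral_self_wrt_runMax
    (f : ℝ → ℝ) (hf : Continuous f) (T : ℝ) (hT : 0 < T)
    (μM : Measure ℝ)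
    (hμM : ∀ a b : ℝ, a ≤ b →
      μM (Set.Ioc a b) = ENNReal.ofReal (runMax f T b - runMax f T a)) :
    ∀ t ∈ Set.Icc (0:ℝ) T,
      ∫ s in Set.Ioc (0:ℝ) t, f s ∂μM
        = ((runMax f T t) ^ 2 - (runMax f T 0) ^ 2) / 2 :=
  integral_self_wrt_runMax_general f hf T μM hμM
end

section
/- Let r > 0, d ≥ 1, and let μ_1, …, μ_d : [0,T] → (0,1] be continuous with Σ_{i=1}^d μ_i(t) = 1 for all t ∈ [0,T] and μ_i(0) ≤ 1/(r e) for every i; let m_i(t) := min_{0 ≤ s ≤ t} μ_i(s). With li_r(x) := ∫_0^x du/log(ru), set κ := −1 − Σ_i li_r(μ_i(0)), p := −log( max_i { −r μ_i(0) log(r μ_i(0)) } ) + κ, Γ(t) := Σ_i ( m_i(t) − μ_i(0) + li_r(m_i(t)) − li_r(μ_i(0)) ), and V(t) := −p − Σ_i μ_i(t) log( −r m_i(t) log(r m_i(t)) ) + Γ(t). Fix 0 < T* ≤ T and assume −log( max_{1 ≤ i ≤ d} { −r m_i(T*) log(r m_i(T*)) } ) > −Σ_{i=1}^d μ_i(0)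 log( −r μ_i(0) log(r μ_i(0)) ) − κ. Then V(t) ≥ 0 for all t ∈ [0,T], and V(t) > V(0) for every t ∈ [T*, T]. (Example 6.4: the strategy additively generated by the iterated entropy functional with running minimum is strong arbitrage relative to the market over every horizon [0,t] with T* ≤ t ≤ T.) -/
/-- The running minimum of `f` on `[0, t]`. -/
noncomputable def runMin (f : ℝ → ℝ) (t : ℝ) : ℝ :=
  sInf (f '' Set.Icc (0:ℝ) t)

/-- `li_r(x) := ∫_0^x du / log(ru)`. -/
noncomputable def lir (r x : ℝ) : ℝ :=
  ∫ u in (0:ℝ)..x, (Real.log (r * u))⁻¹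

/-! Write g_i(t) = −r m_i(t) log(r m_i(t)). Then
V(t) = [log max_i g_i(0) − Σ_i μ_i(t) log g_i(t)] + [Γ(t) − κ].
The running minimum only decreases and x ↦ −x log x increases on (0, e⁻¹], so every g_i is
nonincreasing; since the μ_i(t) are weights, Σ_i μ_i(t) log g_i(t) ≤ log max_i g_i(s) for every
s ≤ t, and the first bracket is nonnegative. The second bracket equals Σ_i (m_i(t) + li_r(m_i(t))),
which is nonnegative because the integrand of li_r takes values in [−1, 0). For t ≥ T*, comparing
with s = T* and using the hypothesis on max_i g_i(T*) gives V(t) > V(0). -/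

open Real Set

lemma Real.abs_inv_log_le_one {y : ℝ} (hy : 0 < y) (hye : y ≤ exp (-1)) : |(log y)⁻¹| ≤ 1 := by
  have hlog : log y ≤ -1 := (log_le_iff_le_exp hy).2 hye
  rw [abs_inv, abs_of_neg (by linarith)]
  exact inv_le_one_of_one_le₀ (by linarith)

lemma Real.negMulLog_pos {x : ℝ} (hx0 : 0 < x) (hx1 : x < 1) : 0 < negMulLog x := by
  have := mul_log_neg hx0 hx1
  rw [negMulLog, neg_mul]
  linarith

lemma Real.negMulLog_le_negMulLog {x y : ℝ} (hx : 0 ≤ x) (hxy : x ≤ y) (hy : y ≤ exp (-1)) :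
    negMulLog x ≤ negMulLog y := by
  have := mul_log_strictAntiOn.antitoneOn ⟨hx, hxy.trans hy⟩ ⟨hx.trans hxy, hy⟩ hxy
  simp only [negMulLog, neg_mul]
  linarith

lemma abs_lir_le {r x : ℝ} (hr : 0 < r) (hx : 0 ≤ x) (hrx : r * x ≤ exp (-1)) :
    |lir r x| ≤ x := by
  have := intervalIntegral.norm_integral_le_of_norm_le_const (a := 0) (b := x) (C := 1)
    (f := fun u => (log (r * u))⁻¹) fun u hu => ?_
  · simpa [lir, abs_of_nonneg hx] using this
  · rw [uIoc_of_le hx] at hu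
    exact abs_inv_log_le_one (mul_pos hr hu.1) ((mul_le_mul_of_nonneg_left hu.2 hr.le).trans hrx)

lemma sum_mul_log_le_log_iSup {ι : Type*} [Fintype ι] {w a b : ι → ℝ}
    (hw : ∀ i, 0 ≤ w i) (hw1 : ∑ i, w i = 1) (ha : ∀ i, 0 < a i) (hab : ∀ i, a i ≤ b i) :
    ∑ i, w i * log (a i) ≤ log (⨆ i, b i) :=
  calc ∑ i, w i * log (a i) ≤ ∑ i, w i * log (⨆ i, b i) :=
        Finset.sum_le_sum fun i _ => mul_le_mul_of_nonneg_left
          (log_le_log (ha i) ((hab i).trans (le_ciSup (finite_range b).bddAbove i))) (hw i)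
    _ = log (⨆ i, b i) := by rw [← Finset.sum_mul, hw1, one_mul]

section RunningMinimum

variable {f : ℝ → ℝ} {s t : ℝ}

lemma runMin_zero (f : ℝ → ℝ) : runMin f 0 = f 0 := by
  simp [runMin]

lemma runMin_mem_image (hf : ContinuousOn f (Icc 0 t)) (ht : 0 ≤ t) :
    runMin f t ∈ f '' Icc 0 t :=
  (isCompact_Icc.image_of_continuousOn hf).sInf_mem ((nonempty_Icc.2 ht).image f)

lemma runMin_le (hf : ContinuousOn f (Icc 0 t)) (hs : s ∈ Icc 0 t) : runMin f t ≤ f s :=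
  csInf_le (isCompact_Icc.image_of_continuousOn hf).bddBelow (mem_image_of_mem f hs)

lemma runMin_le_runMin (hf : ContinuousOn f (Icc 0 t)) (hs : 0 ≤ s) (hst : s ≤ t) :
    runMin f t ≤ runMin f s :=
  csInf_le_csInf (isCompact_Icc.image_of_continuousOn hf).bddBelow ((nonempty_Icc.2 hs).image f)
    (image_mono (Icc_subset_Icc_right hst))

lemma runMin_pos (hf : ContinuousOn f (Icc 0 t)) (ht : 0 ≤ t) (hpos : ∀ s ∈ Icc 0 t, 0 < f s) :
    0 < runMin f t := by
  obtain ⟨s, hs, hfs⟩ := runMin_mem_image hf ht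
  exact hfs ▸ hpos s hs

end RunningMinimum

section IteratedEntropy

variable {ι : Type*} [Fintype ι] {r T s t : ℝ} {w : ι → ℝ → ℝ}

lemma mul_runMin_le_exp_neg_one {f : ℝ → ℝ} (hr : 0 < r) (hf : ContinuousOn f (Icc 0 t))
    (ht : 0 ≤ t) (hf0 : r * f 0 ≤ exp (-1)) : r * runMin f t ≤ exp (-1) :=
  (mul_le_mul_of_nonneg_left (runMin_le hf (left_mem_Icc.2 ht)) hr.le).trans hf0

lemma sum_mul_log_negMulLog_runMin_le (hr : 0 < r)
    (hw_cont : ∀ i, ContinuousOn (w i) (Icc 0 T)) (hw_pos : ∀ i, ∀ t ∈ Icc 0 T, 0 < w i t)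
    (hw_init : ∀ i, r * w i 0 ≤ exp (-1)) (hw_sum : ∑ i, w i t = 1)
    (hs : 0 ≤ s) (hst : s ≤ t) (htT : t ≤ T) :
    ∑ i, w i t * log (-(r * runMin (w i) t) * log (r * runMin (w i) t))
      ≤ log (⨆ i, -(r * runMin (w i) s) * log (r * runMin (w i) s)) := by
  have hcont {u} (hu : u ≤ T) (i : ι) : ContinuousOn (w i) (Icc 0 u) :=
    (hw_cont i).mono (Icc_subset_Icc_right hu)
  have hpos (i : ι) : 0 < r * runMin (w i) t :=
    mul_pos hr (runMin_pos (hcont htT i) (hs.trans hst)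
      fun u hu => hw_pos i u ⟨hu.1, hu.2.trans htT⟩)
  refine sum_mul_log_le_log_iSup (fun i => (hw_pos i t ⟨hs.trans hst, htT⟩).le) hw_sum
    (fun i => negMulLog_pos (hpos i) ?_) fun i => negMulLog_le_negMulLog (hpos i).le ?_ ?_
  · exact (mul_runMin_le_exp_neg_one hr (hcont htT i) (hs.trans hst) (hw_init i)).trans_lt
      (by norm_num)
  · exact mul_le_mul_of_nonneg_left (runMin_le_runMin (hcont htT i) hs hst) hr.le
  · exact mul_runMin_le_exp_neg_one hr (hcont (hst.trans htT) i) hs (hw_init i)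

lemma neg_one_sub_sum_lir_le (hr : 0 < r)
    (hw_cont : ∀ i, ContinuousOn (w i) (Icc 0 T)) (hw_pos : ∀ i, ∀ t ∈ Icc 0 T, 0 < w i t)
    (hw_init : ∀ i, r * w i 0 ≤ exp (-1)) (hw_sum : ∑ i, w i 0 = 1) (ht : t ∈ Icc 0 T) :
    -1 - ∑ i, lir r (w i 0)
      ≤ ∑ i, (runMin (w i) t - w i 0 + lir r (runMin (w i) t) - lir r (w i 0)) := by
  have hm_add_lir (i : ι) : 0 ≤ runMin (w i) t + lir r (runMin (w i) t) := by
    have hcont := (hw_cont i).mono (Icc_subset_Icc_right ht.2)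
    have hm_pos := runMin_pos hcont ht.1 fun u hu => hw_pos i u ⟨hu.1, hu.2.trans ht.2⟩
    have := abs_lir_le hr hm_pos.le (mul_runMin_le_exp_neg_one hr hcont ht.1 (hw_init i))
    linarith [neg_abs_le (lir r (runMin (w i) t))]
  have := Finset.sum_nonneg fun i (_ : i ∈ Finset.univ) => hm_add_lir i
  simp only [Finset.sum_add_distrib, Finset.sum_sub_distrib] at this ⊢
  linarith

end IteratedEntropy

theorem iterated_entropy_with_running_minimum_arbitrage_general
    (r T Tstar : ℝ) (hr : 0 < r) (hTstar : 0 < Tstar) (hTstarT : Tstar ≤ T)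
    (d : ℕ) (w : Fin d → ℝ → ℝ)
    (hw_cont : ∀ i, ContinuousOn (w i) (Set.Icc (0:ℝ) T))
    (hw_mem : ∀ i, ∀ t ∈ Set.Icc (0:ℝ) T, w i t ∈ Set.Ioc (0:ℝ) 1)
    (hw_sum : ∀ t ∈ Set.Icc (0:ℝ) T, ∑ i, w i t = 1)
    (hw_init : ∀ i, w i 0 ≤ 1 / (r * Real.exp 1))
    (m : Fin d → ℝ → ℝ) (hm : ∀ i t, m i t = runMin (w i) t)
    (κ : ℝ) (hκ : κ = -1 - ∑ i, lir r (w i 0))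
    (p : ℝ)
    (hp : p = -Real.log (⨆ i, (-(r * w i 0) * Real.log (r * w i 0))) + κ)
    (Γ : ℝ → ℝ)
    (hΓ : ∀ t, Γ t = ∑ i, (m i t - w i 0 + lir r (m i t) - lir r (w i 0)))
    (V : ℝ → ℝ)
    (hV : ∀ t, V t
      = -p - (∑ i, w i t * Real.log (-(r * m i t) * Real.log (r * m i t))) + Γ t)
    (harb : -Real.log (⨆ i, (-(r * m i Tstar) * Real.log (r * m i Tstar)))
      > -(∑ i, w i 0 * Real.log (-(r * w i 0) * Real.log (r * w i 0))) - κ) :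
    (∀ t ∈ Set.Icc (0:ℝ) T, 0 ≤ V t) ∧
      ∀ t ∈ Set.Icc Tstar T, V 0 < V t := by
  have hT : 0 ≤ T := hTstar.le.trans hTstarT
  have hw_pos : ∀ i, ∀ t ∈ Icc 0 T, 0 < w i t := fun i t ht => (hw_mem i t ht).1
  have hw_init' : ∀ i, r * w i 0 ≤ exp (-1) := fun i => by
    have := mul_le_mul_of_nonneg_left (hw_init i) hr.le
    rwa [mul_one_div, div_mul_cancel_left₀ hr.ne', ← exp_neg] at this
  have hweighted {s t : ℝ} (hs : 0 ≤ s) (hst : s ≤ t) (htT : t ≤ T) :=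
    sum_mul_log_negMulLog_runMin_le hr hw_cont hw_pos hw_init'
      (hw_sum t ⟨hs.trans hst, htT⟩) hs hst htT
  have hκΓ (t : ℝ) (ht : t ∈ Icc 0 T) : κ ≤ Γ t := by
    simpa only [hκ, hΓ, hm] using
      neg_one_sub_sum_lir_le hr hw_cont hw_pos hw_init' (hw_sum 0 ⟨le_rfl, hT⟩) ht
  simp only [hm] at hV harb
  have hV0 : V 0 = -p - ∑ i, w i 0 * log (-(r * w i 0) * log (r * w i 0)) := by
    simp [hV, hΓ, hm, runMin_zero]
  have hp' : -p = log (⨆ i, -(r * runMin (w i) 0) * log (r * runMin (w i) 0)) - κ := by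
    simp only [hp, runMin_zero]
    ring
  refine ⟨fun t ht => ?_, fun t ht => ?_⟩
  · linarith [hV t, hweighted le_rfl ht.1 ht.2, hκΓ t ht]
  · linarith [hV t, hweighted hTstar.le ht.1 ht.2, hκΓ t ⟨hTstar.le.trans ht.1, ht.2⟩]

/-- Example 6.4: the strategy additively generated by the iterated entropy
functional with running minimum is strong arbitrage relative to the market
over every horizon `[0,t]` with `T* ≤ t ≤ T`. -/
theorem iterated_entropy_with_running_minimum_arbitrage
    (r T Tstar : ℝ) (hr : 0 < r) (hTstar : 0 < Tstar) (hTstarT : Tstar ≤ T)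
    (d : ℕ) (hd : 1 ≤ d) (w : Fin d → ℝ → ℝ)
    (hw_cont : ∀ i, ContinuousOn (w i) (Set.Icc (0:ℝ) T))
    (hw_mem : ∀ i, ∀ t ∈ Set.Icc (0:ℝ) T, w i t ∈ Set.Ioc (0:ℝ) 1)
    (hw_sum : ∀ t ∈ Set.Icc (0:ℝ) T, ∑ i, w i t = 1)
    (hw_init : ∀ i, w i 0 ≤ 1 / (r * Real.exp 1))
    (m : Fin d → ℝ → ℝ) (hm : ∀ i t, m i t = runMin (w i) t)
    (κ : ℝ) (hκ : κ = -1 - ∑ i, lir r (w i 0))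
    (p : ℝ)
    (hp : p = -Real.log (⨆ i, (-(r * w i 0) * Real.log (r * w i 0))) + κ)
    (Γ : ℝ → ℝ)
    (hΓ : ∀ t, Γ t = ∑ i, (m i t - w i 0 + lir r (m i t) - lir r (w i 0)))
    (V : ℝ → ℝ)
    (hV : ∀ t, V t
      = -p - (∑ i, w i t * Real.log (-(r * m i t) * Real.log (r * m i t))) + Γ t)
    (harb : -Real.log (⨆ i, (-(r * m i Tstar) * Real.log (r * m i Tstar)))
      > -(∑ i, w i 0 * Real.log (-(r * w i 0) * Real.log (r * w i 0))) - κ) :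
    (∀ t ∈ Set.Icc (0:ℝ) T, 0 ≤ V t) ∧
      ∀ t ∈ Set.Icc Tstar T, V 0 < V t :=
  iterated_entropy_with_running_minimum_arbitrage_general r T Tstar hr hTstar hTstarT d w hw_cont
    hw_mem hw_sum hw_init m hm κ hκ p hp Γ hΓ V hV harb
end
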